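/- Let m, n, r, s be positive integers and let 1 ≤ μ < √(mn)/(r√s). Suppose X = L + S ∈ ℝ^{m×n} where L is μ-incoherent of rank at most r and S has at most s nonzero entries. Then ‖L‖_F ≤ (1 − μ²r²s/(mn))^{−1/2} ‖X‖_F and ‖S‖_F ≤ (1 − μ²r²s/(mn))^{−1/2} ‖X‖_F. -/

import Mathlib

open scoped BigOperators
open Matrix

noncomputable section

def mInner {m n : ℕ} (A B : Matrix (Fin m) (Fin n) ℝ) : ℝ := ∑ i, ∑ j, A i j * B i j

def frobSq {m n : ℕ} (A : Matrix (Fin m) (Fin n) ℝ) : ℝ := ∑ i, ∑ j, (A i j) ^ 2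

def frobNorm {m n : ℕ} (A : Matrix (Fin m) (Fin n) ℝ) : ℝ := Real.sqrt (frobSq A)

def vInner {p : ℕ} (u v : Fin p → ℝ) : ℝ := ∑ i, u i * v i

def vNormSq {p : ℕ} (v : Fin p → ℝ) : ℝ := ∑ i, (v i) ^ 2

def vNorm {p : ℕ} (v : Fin p → ℝ) : ℝ := Real.sqrt (vNormSq v)

/-- Number of nonzero entries of a matrix. -/
def sparseCount {m n : ℕ} (S : Matrix (Fin m) (Fin n) ℝ) : ℕ :=
  {q : Fin m × Fin n | S q.1 q.2 ≠ 0}.ncard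

/-- `L` is `μ`-incoherent of rank at most `r`: `rank L ≤ r` and `L` admits a (truncated)
singular value decomposition `L = U * diagonal d * Vᵀ` with `U ∈ ℝ^{m×r}`, `V ∈ ℝ^{n×r}`
having orthonormal columns (the top `r` left/right singular vectors) whose rows satisfy
`‖Uᵀ eᵢ‖₂ ≤ √(μ r / m)` and `‖Vᵀ fⱼ‖₂ ≤ √(μ r / n)`. -/
def Incoherent {m n : ℕ} (μ : ℝ) (r : ℕ) (L : Matrix (Fin m) (Fin n) ℝ) : Prop :=
  L.rank ≤ r ∧
  ∃ (U : Matrix (Fin m) (Fin r) ℝ) (d : Fin r → ℝ) (V : Matrix (Fin n) (Fin r) ℝ),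
    Uᵀ * U = 1 ∧ Vᵀ * V = 1 ∧ (∀ k, 0 ≤ d k) ∧ L = U * Matrix.diagonal d * Vᵀ ∧
    (∀ i : Fin m, Real.sqrt (∑ k, (U i k) ^ 2) ≤ Real.sqrt (μ * r / m)) ∧
    (∀ j : Fin n, Real.sqrt (∑ k, (V j k) ^ 2) ≤ Real.sqrt (μ * r / n))

/-- The set of low-rank plus sparse matrices `LS_{m,n}(r,s,μ)`. -/
def LS (m n r s : ℕ) (μ : ℝ) : Set (Matrix (Fin m) (Fin n) ℝ) :=
  {X | ∃ L S : Matrix (Fin m) (Fin n) ℝ,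
      X = L + S ∧ Incoherent μ r L ∧ sparseCount S ≤ s}

/-!
Write `q = μ²r²s/(mn)`. Incoherence bounds every entry of `L` by `L_ij² ≤ μ²r²/(mn) · ‖L‖_F²`,
so on the at most `s` entries where `S` is nonzero, Cauchy–Schwarz gives
`⟨L, S⟩² ≤ q ‖L‖_F² ‖S‖_F²`. By AM–GM the cross term of
`‖X‖_F² = ‖L‖_F² + 2⟨L, S⟩ + ‖S‖_F²` is then at least `-(q‖L‖_F² + ‖S‖_F²)`, leaving
`‖X‖_F² ≥ (1 - q) ‖L‖_F²`; symmetrically for `S`. The hypothesis on `μ` is exactly `q < 1`.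
-/

lemma frobSq_nonneg {m n : ℕ} (A : Matrix (Fin m) (Fin n) ℝ) : 0 ≤ frobSq A := by
  unfold frobSq; positivity

lemma frobSq_eq_trace {m n : ℕ} (A : Matrix (Fin m) (Fin n) ℝ) :
    frobSq A = (Aᵀ * A).trace := by
  simp only [frobSq, Matrix.trace, Matrix.mul_apply, Matrix.diag, Matrix.transpose_apply, sq]
  rw [Finset.sum_comm]

lemma frobSq_add {m n : ℕ} (A B : Matrix (Fin m) (Fin n) ℝ) :
    frobSq (A + B) = frobSq A + 2 * mInner A B + frobSq B := by
  simp only [frobSq, mInner, Matrix.add_apply, Finset.mul_sum, ← Finset.sum_add_distrib]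
  exact Finset.sum_congr rfl fun i _ => Finset.sum_congr rfl fun j _ => by ring

section Factorization

variable {m n : ℕ} {κ : Type*} [Fintype κ] [DecidableEq κ]
  (U : Matrix (Fin m) κ ℝ) (d : κ → ℝ) (V : Matrix (Fin n) κ ℝ)

lemma frobSq_mul_diagonal_mul_transpose (hU : Uᵀ * U = 1) (hV : Vᵀ * V = 1) :
    frobSq (U * diagonal d * Vᵀ) = ∑ k, d k ^ 2 := by
  have hgram : (U * diagonal d * Vᵀ)ᵀ * (U * diagonal d * Vᵀ)
      = V * (diagonal d * (diagonal d * Vᵀ)) := by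
    simp only [Matrix.transpose_mul, Matrix.transpose_transpose, Matrix.diagonal_transpose,
      Matrix.mul_assoc]
    rw [← Matrix.mul_assoc Uᵀ U, hU, Matrix.one_mul]
  rw [frobSq_eq_trace, hgram, ← Matrix.mul_assoc, ← Matrix.mul_assoc, Matrix.trace_mul_cycle,
    ← Matrix.mul_assoc, hV, Matrix.one_mul]
  simp [Matrix.diagonal_mul_diagonal, Matrix.trace, sq]

/-- Cauchy–Schwarz over the factorization index. -/
lemma sq_mul_diagonal_mul_transpose_apply_le {α β : ℝ} (i : Fin m) (j : Fin n)
    (hU : ∑ k, U i k ^ 2 ≤ α) (hV : ∑ k, V j k ^ 2 ≤ β) :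
    (U * diagonal d * Vᵀ) i j ^ 2 ≤ α * β * ∑ k, d k ^ 2 := by
  have hα : 0 ≤ α := (Finset.sum_nonneg fun k _ => sq_nonneg (U i k)).trans hU
  have hentry : (U * diagonal d * Vᵀ) i j = ∑ k, U i k * (d k * V j k) := by
    rw [Matrix.mul_assoc, Matrix.mul_apply]
    exact Finset.sum_congr rfl fun k _ => by rw [Matrix.diagonal_mul, Matrix.transpose_apply]
  have hVk : ∀ k, V j k ^ 2 ≤ β := fun k =>
    (Finset.single_le_sum (fun k' _ => sq_nonneg (V j k')) (Finset.mem_univ k)).trans hV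
  calc (U * diagonal d * Vᵀ) i j ^ 2
      ≤ (∑ k, U i k ^ 2) * ∑ k, (d k * V j k) ^ 2 := by
        rw [hentry]; exact Finset.sum_mul_sq_le_sq_mul_sq _ _ _
    _ ≤ α * ∑ k, β * d k ^ 2 := by
        gcongr with k
        rw [mul_pow, mul_comm]; gcongr; exact hVk k
    _ = α * β * ∑ k, d k ^ 2 := by rw [← Finset.mul_sum, mul_assoc]

end Factorization

lemma Incoherent.sq_apply_le {m n r : ℕ} {μ : ℝ} {L : Matrix (Fin m) (Fin n) ℝ} (hμ : 0 ≤ μ)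
    (hL : Incoherent μ r L) (i : Fin m) (j : Fin n) :
    L i j ^ 2 ≤ μ ^ 2 * (r : ℝ) ^ 2 / ((m : ℝ) * n) * frobSq L := by
  obtain ⟨-, U, d, V, hU, hV, -, rfl, hUrow, hVrow⟩ := hL
  have hUi : ∑ k, U i k ^ 2 ≤ μ * r / m := (Real.sqrt_le_sqrt_iff (by positivity)).mp (hUrow i)
  have hVj : ∑ k, V j k ^ 2 ≤ μ * r / n := (Real.sqrt_le_sqrt_iff (by positivity)).mp (hVrow j)
  calc (U * diagonal d * Vᵀ) i j ^ 2 ≤ μ * r / m * (μ * r / n) * ∑ k, d k ^ 2 :=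
        sq_mul_diagonal_mul_transpose_apply_le U d V i j hUi hVj
    _ = _ := by rw [frobSq_mul_diagonal_mul_transpose U d V hU hV]; ring

lemma sparseCount_eq_card {m n : ℕ} (S : Matrix (Fin m) (Fin n) ℝ) :
    sparseCount S = (Finset.univ.filter fun q : Fin m × Fin n => S q.1 q.2 ≠ 0).card := by
  rw [sparseCount, ← Set.ncard_coe_finset, Finset.coe_filter]
  simp

/-- Only the `≤ s` entries in the support of `S` contribute to `⟪L, S⟫`. -/
lemma sq_mInner_le_of_sparseCount_le {m n s : ℕ} {c : ℝ} (L S : Matrix (Fin m) (Fin n) ℝ)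
    (hc : 0 ≤ c) (hL : ∀ i j, L i j ^ 2 ≤ c) (hS : sparseCount S ≤ s) :
    mInner L S ^ 2 ≤ s * c * frobSq S := by
  set T := Finset.univ.filter fun q : Fin m × Fin n => S q.1 q.2 ≠ 0
  have hT : (T.card : ℝ) ≤ s := by rw [sparseCount_eq_card] at hS; exact_mod_cast hS
  have hinner : mInner L S = ∑ q ∈ T, L q.1 q.2 * S q.1 q.2 := by
    rw [mInner, ← Finset.sum_product', Finset.univ_product_univ]
    refine (Finset.sum_filter_of_ne ?_).symm
    intro q _ hne h0
    rw [h0, mul_zero] at hne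
    exact hne rfl
  have hLT : ∑ q ∈ T, L q.1 q.2 ^ 2 ≤ s * c :=
    calc ∑ q ∈ T, L q.1 q.2 ^ 2 ≤ T.card * c := by
          simpa using Finset.sum_le_sum fun q (_ : q ∈ T) => hL q.1 q.2
      _ ≤ s * c := by gcongr
  have hST : ∑ q ∈ T, S q.1 q.2 ^ 2 ≤ frobSq S := by
    rw [frobSq, ← Finset.sum_product']
    exact Finset.sum_le_sum_of_subset_of_nonneg (Finset.filter_subset _ _)
      fun q _ _ => sq_nonneg _
  calc mInner L S ^ 2 ≤ (∑ q ∈ T, L q.1 q.2 ^ 2) * ∑ q ∈ T, S q.1 q.2 ^ 2 := by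
        rw [hinner]; exact Finset.sum_mul_sq_le_sq_mul_sq _ _ _
    _ ≤ s * c * frobSq S := by gcongr

/-- `|2t| ≤ qA + B` by AM–GM, which absorbs the cross term of `A + 2t + B`. -/
lemma one_sub_mul_le_of_sq_le {q A B t : ℝ} (hq : 0 ≤ q) (hA : 0 ≤ A) (hB : 0 ≤ B)
    (ht : t ^ 2 ≤ q * A * B) : (1 - q) * A ≤ A + 2 * t + B := by
  have hsq : (2 * t) ^ 2 ≤ (q * A + B) ^ 2 := by nlinarith [sq_nonneg (q * A - B)]
  linarith [(abs_le_of_sq_le_sq' hsq (by positivity)).1]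

lemma one_sub_mul_le_of_sq_le' {q A B t : ℝ} (hq : 0 ≤ q) (hA : 0 ≤ A) (hB : 0 ≤ B)
    (ht : t ^ 2 ≤ q * A * B) : (1 - q) * B ≤ A + 2 * t + B := by
  linarith [one_sub_mul_le_of_sq_le hq hB hA (t := t) (by linarith [mul_right_comm q A B])]

lemma sq_mul_div_lt_one_of_lt_sqrt_div {m n r s : ℕ} {μ : ℝ} (hμ0 : 0 ≤ μ)
    (hμ : μ < Real.sqrt (m * n) / ((r : ℝ) * Real.sqrt s)) :
    μ ^ 2 * (r : ℝ) ^ 2 * (s : ℝ) / ((m : ℝ) * n) < 1 := by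
  have hden : 0 < (r : ℝ) * Real.sqrt s := by
    by_contra! h
    rw [le_antisymm h (by positivity), div_zero] at hμ
    linarith
  have hlt : μ * ((r : ℝ) * Real.sqrt s) < Real.sqrt (m * n) := (lt_div_iff₀ hden).mp hμ
  have hsq : μ ^ 2 * (r : ℝ) ^ 2 * (s : ℝ) < (m : ℝ) * n := by
    have := pow_lt_pow_left₀ hlt (by positivity) two_ne_zero
    rwa [Real.sq_sqrt (by positivity), mul_pow, mul_pow, Real.sq_sqrt (by positivity),
      ← mul_assoc] at this
  rwa [div_lt_one (lt_of_le_of_lt (by positivity) hsq)]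

lemma sqrt_le_rpow_mul_sqrt {q A X : ℝ} (hq : q < 1) (hA : 0 ≤ A) (h : (1 - q) * A ≤ X) :
    Real.sqrt A ≤ (1 - q) ^ (-(1/2) : ℝ) * Real.sqrt X := by
  have hpos : 0 < 1 - q := by linarith
  rw [Real.rpow_neg hpos.le, ← Real.sqrt_eq_rpow, inv_mul_eq_div,
    le_div_iff₀ (Real.sqrt_pos.mpr hpos), ← Real.sqrt_mul hA, mul_comm]
  exact Real.sqrt_le_sqrt h

theorem component_norm_bound_general
    (m n r s : ℕ) (μ : ℝ) (hμ1 : 1 ≤ μ) (hμ : μ < Real.sqrt (m * n) / ((r : ℝ) * Real.sqrt s))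
    (X L S : Matrix (Fin m) (Fin n) ℝ) (hX : X = L + S)
    (hL : Incoherent μ r L) (hS : sparseCount S ≤ s) :
    frobNorm L ≤ (1 - μ ^ 2 * (r : ℝ) ^ 2 * (s : ℝ) / ((m : ℝ) * n)) ^ (-(1/2) : ℝ) * frobNorm X ∧
    frobNorm S ≤ (1 - μ ^ 2 * (r : ℝ) ^ 2 * (s : ℝ) / ((m : ℝ) * n)) ^ (-(1/2) : ℝ) * frobNorm X := by
  have hμ0 : 0 ≤ μ := zero_le_one.trans hμ1
  set q := μ ^ 2 * (r : ℝ) ^ 2 * (s : ℝ) / ((m : ℝ) * n)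
  have hq : q < 1 := sq_mul_div_lt_one_of_lt_sqrt_div hμ0 hμ
  have hq0 : 0 ≤ q := by positivity
  have hcross : mInner L S ^ 2 ≤ q * frobSq L * frobSq S := by
    calc mInner L S ^ 2 ≤ s * (μ ^ 2 * (r : ℝ) ^ 2 / ((m : ℝ) * n) * frobSq L) * frobSq S :=
          sq_mInner_le_of_sparseCount_le L S (by have := frobSq_nonneg L; positivity)
            (hL.sq_apply_le hμ0) hS
      _ = q * frobSq L * frobSq S := by ring
  have hXsq : frobSq X = frobSq L + 2 * mInner L S + frobSq S := by rw [hX, frobSq_add]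
  have hLX : (1 - q) * frobSq L ≤ frobSq X := hXsq ▸
    one_sub_mul_le_of_sq_le hq0 (frobSq_nonneg L) (frobSq_nonneg S) hcross
  have hSX : (1 - q) * frobSq S ≤ frobSq X := hXsq ▸
    one_sub_mul_le_of_sq_le' hq0 (frobSq_nonneg L) (frobSq_nonneg S) hcross
  exact ⟨sqrt_le_rpow_mul_sqrt hq (frobSq_nonneg L) hLX,
    sqrt_le_rpow_mul_sqrt hq (frobSq_nonneg S) hSX⟩

/-- Frobenius-norm bounds on the components of an incoherent low-rank plus
sparse decomposition, with `τ = (1 − μ²r²s/(mn))^{−1/2}`. -/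
theorem component_norm_bound
    (m n r s : ℕ) (hm : 0 < m) (hn : 0 < n) (hr : 0 < r) (hs : 0 < s)
    (μ : ℝ) (hμ1 : 1 ≤ μ) (hμ : μ < Real.sqrt (m * n) / ((r : ℝ) * Real.sqrt s))
    (X L S : Matrix (Fin m) (Fin n) ℝ) (hX : X = L + S)
    (hL : Incoherent μ r L) (hS : sparseCount S ≤ s) :
    frobNorm L ≤ (1 - μ ^ 2 * (r : ℝ) ^ 2 * (s : ℝ) / ((m : ℝ) * n)) ^ (-(1/2) : ℝ) * frobNorm X ∧
    frobNorm S ≤ (1 - μ ^ 2 * (r : ℝ) ^ 2 * (s : ℝ) / ((m : ℝ) * n)) ^ (-(1/2) : ℝ) * frobNorm X :=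
  component_norm_bound_general m n r s μ hμ1 hμ X L S hX hL hS
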